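/- There exists a player-1 strategy π_1 in the labeled game graph Ḡ such that for every player-2 strategy π_2, the set L(ω(v_in,π_1,π_2)) \ {$} is a vertex cover of the graph G. -/

import Mathlib

/-- `π` is a valid strategy for the player owning the vertices satisfying `owns`:
for every history `w` and current vertex `v` owned by the player, the chosen
successor `π w v` is along an edge of the game graph. -/
def IsStrat {V : Type*} (E : V → V → Prop) (owns : V → Prop)
    (π : List V → V → V) : Prop :=
  ∀ (w : List V) (v : V), owns v → E v (π w v)

/-- Auxiliary function computing, after `i` steps of the play from `v`, the pair
(current vertex, history of previously visited vertices).  Here `P1 v = true` means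
`v` is a player-1 vertex, and `P1 v = false` that it is a player-2 vertex. -/
def playSeq {V : Type*} (P1 : V → Bool) (π1 π2 : List V → V → V) (v : V) :
    ℕ → V × List V
  | 0 => (v, [])
  | i + 1 =>
    let p := playSeq P1 π1 π2 v i
    (if P1 p.1 then π1 p.2 p.1 else π2 p.2 p.1, p.2 ++ [p.1])

/-- The unique play `ω(v, π1, π2)`: the `i`-th vertex of the infinite play starting
at `v` in which player 1 (resp. player 2) resolves choices at vertices `u` with
`P1 u = true` (resp. `P1 u = false`) using strategy `π1` (resp. `π2`). -/
def play {V : Type*} (P1 : V → Bool) (π1 π2 : List V → V → V) (v : V) (i : ℕ) : V :=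
  (playSeq P1 π1 π2 v i).1

/-- `U` is a vertex cover of the undirected graph `G`: every edge of `G` has at
least one endpoint in `U`. -/
def IsVertexCover {V : Type*} (G : SimpleGraph V) (U : Set V) : Prop :=
  ∀ a b : V, G.Adj a b → a ∈ U ∨ b ∈ U

/-- The vertices of the labeled game graph `Ḡ` built from the undirected graph `G`:
the initial vertex `v_in` (`Sum.inl ()`), a vertex for each edge `e` of `G`
(`Sum.inr (Sum.inl e)`), and a vertex `(e,u)` for each edge `e` and endpoint `u` of
`e` (`Sum.inr (Sum.inr ...)`). -/
def BarV {V : Type*} (G : SimpleGraph V) : Type _ :=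
  Unit ⊕ (G.edgeSet ⊕ {p : Sym2 V × V // p.1 ∈ G.edgeSet ∧ p.2 ∈ p.1})

/-- The edges of `Ḡ`: from `v_in` to every edge-vertex, from each edge-vertex `e` to
the endpoint vertices `(e,u)` with `u ∈ e`, and from every endpoint vertex back to
`v_in`. -/
def BarE {V : Type*} (G : SimpleGraph V) : BarV G → BarV G → Prop
  | Sum.inl _, Sum.inr (Sum.inl _) => True
  | Sum.inr (Sum.inl e), Sum.inr (Sum.inr p) => p.val.1 = e.val
  | Sum.inr (Sum.inr _), Sum.inl _ => True
  | _, _ => False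

/-- The partition of the vertices of `Ḡ`: the edge-vertices belong to player 2 and
all other vertices belong to player 1. -/
def BarP1 {V : Type*} (G : SimpleGraph V) : BarV G → Bool
  | Sum.inr (Sum.inl _) => false
  | _ => true

/-- The labeling of `Ḡ` with propositions `AP = V ∪ {$}`, encoded as `Option V`
(with `none` playing the role of `$`): the initial vertex and the edge-vertices are
labeled `{$}`, and each endpoint vertex `(e,u)` is labeled `{u}`. -/
def BarL {V : Type*} (G : SimpleGraph V) : BarV G → Set (Option V)
  | Sum.inr (Sum.inr p) => {some p.val.2}
  | _ => {none}

/-! Player 1 fixes an enumeration `f : ℕ → E(G)` of the (finitely many, hence countably many)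
edges and, every time the play is back at `v_in`, moves to the next edge vertex `f k`. A play
then runs in rounds `v_in → f k → (f k, u) → v_in` of length three, so the round number is the
history length divided by three. Whatever endpoint `u` player 2 chooses in round `k`, it is a
label of the play, so every edge of `G` has a labelled endpoint. -/

section Play

variable {V : Type*} (P1 : V → Bool) (π1 π2 : List V → V → V) (v : V)

theorem playSeq_snd_length (i : ℕ) : (playSeq P1 π1 π2 v i).2.length = i := by
  induction i with
  | zero => rfl
  | succ i ih => simp [playSeq, ih]

theorem play_succ (i : ℕ) :
    play P1 π1 π2 v (i + 1) =
      if P1 (play P1 π1 π2 v i) then π1 (playSeq P1 π1 π2 v i).2 (play P1 π1 π2 v i)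
      else π2 (playSeq P1 π1 π2 v i).2 (play P1 π1 π2 v i) :=
  rfl

end Play

theorem isVertexCover_of_forall_exists_mem {V : Type*} {G : SimpleGraph V} {U : Set V}
    (h : ∀ e ∈ G.edgeSet, ∃ u ∈ e, u ∈ U) : IsVertexCover G U := by
  intro a b hab
  obtain ⟨u, hu, huU⟩ := h s(a, b) hab
  rcases Sym2.mem_iff.mp hu with rfl | rfl
  exacts [Or.inl huU, Or.inr huU]

namespace BarV

variable {V : Type*} {G : SimpleGraph V}

-- Stated at type `BarV G` rather than at the underlying sum type, for which `rw` fails to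
-- match inside `play`.
def init : BarV G := Sum.inl ()

def edge (e : G.edgeSet) : BarV G := Sum.inr (Sum.inl e)

def endpoint (p : {p : Sym2 V × V // p.1 ∈ G.edgeSet ∧ p.2 ∈ p.1}) : BarV G :=
  Sum.inr (Sum.inr p)

def enumStrat (f : ℕ → G.edgeSet) (w : List (BarV G)) : BarV G → BarV G :=
  Sum.elim (fun _ => edge (f (w.length / 3))) (fun _ => init)

theorem isStrat_enumStrat (f : ℕ → G.edgeSet) :
    IsStrat (BarE G) (fun v => BarP1 G v = true) (enumStrat f) := by
  rintro w (_ | e | p) hv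
  · trivial
  · exact absurd hv Bool.false_ne_true
  · trivial

theorem exists_endpoint_of_isStrat {π2 : List (BarV G) → BarV G → BarV G}
    (hπ2 : IsStrat (BarE G) (fun v => BarP1 G v = false) π2) (w : List (BarV G))
    (e : G.edgeSet) : ∃ p, π2 w (edge e) = endpoint p ∧ p.val.1 = e.val := by
  have hE := hπ2 w (edge e) rfl
  rcases hx : π2 w (edge e) with _ | _ | p
  all_goals rw [hx] at hE
  · exact hE.elim
  · exact hE.elim
  · exact ⟨p, rfl, hE⟩

variable (f : ℕ → G.edgeSet) {π2 : List (BarV G) → BarV G → BarV G}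

local notation "ω" => play (BarP1 G) (enumStrat f) π2 init

theorem play_succ_of_eq_init {i : ℕ} (h : ω i = init) :
    ω (i + 1) = edge (f (i / 3)) := by
  rw [play_succ, h]
  change edge (f ((playSeq _ _ _ _ i).2.length / 3)) = _
  rw [playSeq_snd_length]

theorem play_succ_of_eq_edge (hπ2 : IsStrat (BarE G) (fun v => BarP1 G v = false) π2)
    {i : ℕ} {e : G.edgeSet} (h : ω i = edge e) :
    ∃ p, ω (i + 1) = endpoint p ∧ p.val.1 = e.val := by
  rw [play_succ, h]
  exact exists_endpoint_of_isStrat hπ2 _ e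

theorem play_succ_of_eq_endpoint {i : ℕ} {p : {p : Sym2 V × V // p.1 ∈ G.edgeSet ∧ p.2 ∈ p.1}}
    (h : ω i = endpoint p) : ω (i + 1) = init := by
  rw [play_succ, h]
  rfl

theorem play_three_mul (hπ2 : IsStrat (BarE G) (fun v => BarP1 G v = false) π2) (k : ℕ) :
    ω (3 * k) = init := by
  induction k with
  | zero => rfl
  | succ k ih =>
    obtain ⟨p, hp, -⟩ := play_succ_of_eq_edge f hπ2 (play_succ_of_eq_init f ih)
    exact play_succ_of_eq_endpoint f hp

theorem exists_play_three_mul_add_two_eq_endpoint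
    (hπ2 : IsStrat (BarE G) (fun v => BarP1 G v = false) π2) (k : ℕ) :
    ∃ p, ω (3 * k + 2) = endpoint p ∧ p.val.1 = (f k).val := by
  have h := play_succ_of_eq_init f (play_three_mul f hπ2 k)
  rw [Nat.mul_div_cancel_left k three_pos] at h
  exact play_succ_of_eq_edge f hπ2 h

end BarV

/-- There exists a player-1 strategy `π_1` in the labeled game graph `Ḡ` such that
for every player-2 strategy `π_2`, the set `L(ω(v_in,π_1,π_2)) \ {$}` is a vertex
cover of the graph `G`. -/
theorem player1_strategy_forces_vertex_cover
    {V : Type*} [Fintype V] (G : SimpleGraph V) (hne : G.edgeSet.Nonempty) :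
    ∃ π1, IsStrat (BarE G) (fun v => BarP1 G v = true) π1 ∧
      ∀ π2, IsStrat (BarE G) (fun v => BarP1 G v = false) π2 →
        IsVertexCover G
          {u : V | some u ∈ ⋃ i : ℕ, BarL G (play (BarP1 G) π1 π2 (Sum.inl ()) i)} := by
  have : Nonempty G.edgeSet := hne.to_subtype
  obtain ⟨f, hf⟩ := exists_surjective_nat G.edgeSet
  refine ⟨BarV.enumStrat f, BarV.isStrat_enumStrat f, fun π2 hπ2 => ?_⟩
  refine isVertexCover_of_forall_exists_mem fun e he => ?_
  obtain ⟨k, hk⟩ := hf ⟨e, he⟩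
  obtain ⟨p, hp, hpe⟩ := BarV.exists_play_three_mul_add_two_eq_endpoint f hπ2 k
  refine ⟨p.val.2, ?_, Set.mem_iUnion.2 ⟨3 * k + 2, ?_⟩⟩
  · simpa [hpe, hk] using p.property.2
  · change _ ∈ BarL G (play _ _ _ BarV.init _)
    rw [hp]
    rfl
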